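/- For discrete random variables (X, Z, L, M, Y) with Y bounded and all relevant conditional probabilities and conditional expectations strictly positive, the quantity η1 = Σ_{x,l,m} E[Y | Z=1, L=l, M=m, X=x] P(L=l | Z=1, X=x) P(M=m | Z=0, X=x) P(X=x) equals the inverse-probability-weighted expectation E[ 1{Z=0} Y / P(Z=0 | X) · (E[Y | Z=1, L, M, X] P(L | Z=1, X)) / (E[Y | Z=0, L, M, X] P(L | Z=0, M, X)) ]. -/
import Mathlib


open Finset

noncomputable def pr {Ω : Type*} [Fintype Ω] (P : Ω → ℝ) (A : Set Ω) : ℝ :=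
  ∑ ω : Ω, A.indicator P ω

noncomputable def cpr {Ω : Type*} [Fintype Ω] (P : Ω → ℝ) (A B : Set Ω) : ℝ :=
  pr P (A ∩ B) / pr P B

noncomputable def cexp {Ω : Type*} [Fintype Ω] (P : Ω → ℝ) (f : Ω → ℝ) (B : Set Ω) : ℝ :=
  (∑ ω : Ω, B.indicator (fun ω => P ω * f ω) ω) / pr P B

noncomputable def ex {Ω : Type*} [Fintype Ω] (P : Ω → ℝ) (f : Ω → ℝ) : ℝ :=
  ∑ ω : Ω, P ω * f ω

def CondIndepFun {Ω : Type*} [Fintype Ω] (P : Ω → ℝ) {α β γ : Type*}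
    (A : Ω → α) (B : Ω → β) (C : Ω → γ) : Prop :=
  ∀ a b c,
    pr P {ω | A ω = a ∧ B ω = b ∧ C ω = c} * pr P {ω | C ω = c} =
      pr P {ω | A ω = a ∧ C ω = c} * pr P {ω | B ω = b ∧ C ω = c}

lemma pr_mono {Ω : Type*} [Fintype Ω] (P : Ω → ℝ) (hP : ∀ ω, 0 ≤ P ω)
    {A B : Set Ω} (h : A ⊆ B) : pr P A ≤ pr P B := by
  apply Finset.sum_le_sum
  intro ω _
  exact Set.indicator_le_indicator_of_subset h (fun ω => hP ω) ω

lemma pr_inter_eq {Ω : Type*} [Fintype Ω] (P : Ω → ℝ) {A B : Set Ω}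
    (hB : pr P B ≠ 0) : pr P (A ∩ B) = cpr P A B * pr P B := by
  unfold cpr; field_simp

lemma cexp_sum {Ω : Type*} [Fintype Ω] (P : Ω → ℝ) (f : Ω → ℝ) {B : Set Ω}
    (hB : pr P B ≠ 0) :
    (∑ ω : Ω, B.indicator (fun ω => P ω * f ω) ω) = cexp P f B * pr P B := by
  unfold cexp; field_simp

/-- Weighting identity for η₁ (Theorem 3.3). -/
theorem eta1_weighting {Ω 𝓜 𝓛 𝓧 : Type*} [Fintype Ω] [Fintype 𝓜] [Fintype 𝓛] [Fintype 𝓧]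
    (P : Ω → ℝ) (hP : ∀ ω, 0 ≤ P ω) (hP1 : ∑ ω : Ω, P ω = 1)
    (Z : Ω → Bool) (L : Ω → 𝓛) (M : Ω → 𝓜) (X : Ω → 𝓧) (Y : Ω → ℝ)
    (hpos : ∀ z l m x, 0 < pr P {ω | Z ω = z ∧ L ω = l ∧ M ω = m ∧ X ω = x})
    (hposY : ∀ l m x, 0 < cexp P Y {ω | Z ω = false ∧ L ω = l ∧ M ω = m ∧ X ω = x})
    (hposL : ∀ z l m x, 0 < cpr P {ω | L ω = l} {ω | Z ω = z ∧ M ω = m ∧ X ω = x}) :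
    (∑ x : 𝓧, ∑ l : 𝓛, ∑ m : 𝓜,
        cexp P Y {ω | Z ω = true ∧ L ω = l ∧ M ω = m ∧ X ω = x} *
          cpr P {ω | L ω = l} {ω | Z ω = true ∧ X ω = x} *
          cpr P {ω | M ω = m} {ω | Z ω = false ∧ X ω = x} *
          pr P {ω | X ω = x}) =
      ex P (fun ω =>
        (if Z ω = false then Y ω else 0) / cpr P {ω' | Z ω' = false} {ω' | X ω' = X ω} *
          (cexp P Y {ω' | Z ω' = true ∧ L ω' = L ω ∧ M ω' = M ω ∧ X ω' = X ω} *
            cpr P {ω' | L ω' = L ω} {ω' | Z ω' = true ∧ X ω' = X ω}) /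
          (cexp P Y {ω' | Z ω' = false ∧ L ω' = L ω ∧ M ω' = M ω ∧ X ω' = X ω} *
            cpr P {ω' | L ω' = L ω} {ω' | Z ω' = false ∧ M ω' = M ω ∧ X ω' = X ω})) := by
  classical
  set g : 𝓛 → 𝓜 → 𝓧 → ℝ := fun l m x =>
    (cexp P Y {ω' | Z ω' = true ∧ L ω' = l ∧ M ω' = m ∧ X ω' = x} *
      cpr P {ω' | L ω' = l} {ω' | Z ω' = true ∧ X ω' = x}) /
    (cpr P {ω' | Z ω' = false} {ω' | X ω' = x} *
      (cexp P Y {ω' | Z ω' = false ∧ L ω' = l ∧ M ω' = m ∧ X ω' = x} *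
        cpr P {ω' | L ω' = l} {ω' | Z ω' = false ∧ M ω' = m ∧ X ω' = x})) with hg
  have step1 : ∀ ω : Ω,
      P ω * ((if Z ω = false then Y ω else 0) / cpr P {ω' | Z ω' = false} {ω' | X ω' = X ω} *
          (cexp P Y {ω' | Z ω' = true ∧ L ω' = L ω ∧ M ω' = M ω ∧ X ω' = X ω} *
            cpr P {ω' | L ω' = L ω} {ω' | Z ω' = true ∧ X ω' = X ω}) /
          (cexp P Y {ω' | Z ω' = false ∧ L ω' = L ω ∧ M ω' = M ω ∧ X ω' = X ω} *
            cpr P {ω' | L ω' = L ω} {ω' | Z ω' = false ∧ M ω' = M ω ∧ X ω' = X ω})) =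
      (if Z ω = false then P ω * Y ω else 0) * g (L ω) (M ω) (X ω) := by
    intro ω
    by_cases hz : Z ω = false <;> simp [hg, hz] <;> ring
  have step2 : ∀ ω : Ω,
      (if Z ω = false then P ω * Y ω else 0) * g (L ω) (M ω) (X ω) =
      ∑ x : 𝓧, ∑ l : 𝓛, ∑ m : 𝓜,
        (if Z ω = false ∧ L ω = l ∧ M ω = m ∧ X ω = x then P ω * Y ω else 0) * g l m x := by
    intro ω
    have h1 : ∀ (x : 𝓧) (l : 𝓛) (m : 𝓜),
        (if Z ω = false ∧ L ω = l ∧ M ω = m ∧ X ω = x then P ω * Y ω else 0) * g l m x =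
        if M ω = m then (if L ω = l then (if X ω = x then
          ((if Z ω = false then P ω * Y ω else 0) * g l m x) else 0) else 0) else 0 := by
      intro x l m
      by_cases hx : X ω = x <;> by_cases hl : L ω = l <;> by_cases hm : M ω = m <;>
        by_cases hz : Z ω = false <;> simp [hx, hl, hm, hz]
    simp only [h1, Finset.sum_ite_eq, Finset.mem_univ, if_true]
  calc (∑ x : 𝓧, ∑ l : 𝓛, ∑ m : 𝓜,
        cexp P Y {ω | Z ω = true ∧ L ω = l ∧ M ω = m ∧ X ω = x} *
          cpr P {ω | L ω = l} {ω | Z ω = true ∧ X ω = x} *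
          cpr P {ω | M ω = m} {ω | Z ω = false ∧ X ω = x} *
          pr P {ω | X ω = x})
      = ∑ x : 𝓧, ∑ l : 𝓛, ∑ m : 𝓜, ∑ ω : Ω,
          (if Z ω = false ∧ L ω = l ∧ M ω = m ∧ X ω = x then P ω * Y ω else 0) * g l m x := by
        refine Finset.sum_congr rfl fun x _ => Finset.sum_congr rfl fun l _ =>
          Finset.sum_congr rfl fun m _ => ?_
        -- inner sum equals cexp₀ * pr₀ * g
        have hsum : (∑ ω : Ω,
            (if Z ω = false ∧ L ω = l ∧ M ω = m ∧ X ω = x then P ω * Y ω else 0) * g l m x) =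
            (∑ ω : Ω, ({ω' | Z ω' = false ∧ L ω' = l ∧ M ω' = m ∧ X ω' = x}).indicator
              (fun ω' => P ω' * Y ω') ω) * g l m x := by
          rw [← Finset.sum_mul]
          congr 1
          refine Finset.sum_congr rfl fun ω _ => ?_
          simp [Set.indicator_apply, Set.mem_setOf_eq]
        rw [hsum]
        have hpr0 : (0:ℝ) < pr P {ω | Z ω = false ∧ L ω = l ∧ M ω = m ∧ X ω = x} :=
          hpos false l m x
        have hZMX : (0:ℝ) < pr P {ω | Z ω = false ∧ M ω = m ∧ X ω = x} :=
          lt_of_lt_of_le hpr0 (pr_mono P hP fun ω hω => ⟨hω.1, hω.2.2.1, hω.2.2.2⟩)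
        have hZX : (0:ℝ) < pr P {ω | Z ω = false ∧ X ω = x} :=
          lt_of_lt_of_le hpr0 (pr_mono P hP fun ω hω => ⟨hω.1, hω.2.2.2⟩)
        have hX : (0:ℝ) < pr P {ω | X ω = x} :=
          lt_of_lt_of_le hpr0 (pr_mono P hP fun ω hω => hω.2.2.2)
        have hsetc0 : {ω | Z ω = false} ∩ {ω | X ω = x} = {ω | Z ω = false ∧ X ω = x} := rfl
        have hc0 : (0:ℝ) < cpr P {ω | Z ω = false} {ω | X ω = x} := by
          unfold cpr; rw [hsetc0]; exact div_pos hZX hX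
        have hD0 : (0:ℝ) < cpr P {ω | L ω = l} {ω | Z ω = false ∧ M ω = m ∧ X ω = x} :=
          hposL false l m x
        have hE0 : (0:ℝ) < cexp P Y {ω | Z ω = false ∧ L ω = l ∧ M ω = m ∧ X ω = x} :=
          hposY l m x
        have e1 : pr P {ω | Z ω = false ∧ L ω = l ∧ M ω = m ∧ X ω = x} =
            cpr P {ω | L ω = l} {ω | Z ω = false ∧ M ω = m ∧ X ω = x} *
              pr P {ω | Z ω = false ∧ M ω = m ∧ X ω = x} := by
          rw [← pr_inter_eq P (ne_of_gt hZMX)]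
          congr 1
          ext ω; simp only [Set.mem_inter_iff, Set.mem_setOf_eq]; tauto
        have e2 : pr P {ω | Z ω = false ∧ M ω = m ∧ X ω = x} =
            cpr P {ω | M ω = m} {ω | Z ω = false ∧ X ω = x} *
              pr P {ω | Z ω = false ∧ X ω = x} := by
          rw [← pr_inter_eq P (ne_of_gt hZX)]
          congr 1
          ext ω; simp only [Set.mem_inter_iff, Set.mem_setOf_eq]; tauto
        have e3 : pr P {ω | Z ω = false ∧ X ω = x} =
            cpr P {ω | Z ω = false} {ω | X ω = x} * pr P {ω | X ω = x} := by
          rw [← pr_inter_eq P (ne_of_gt hX), hsetc0]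
        rw [cexp_sum P Y (ne_of_gt hpr0), hg]
        rw [e1, e2, e3]
        field_simp
    _ = ∑ ω : Ω, ∑ x : 𝓧, ∑ l : 𝓛, ∑ m : 𝓜,
          (if Z ω = false ∧ L ω = l ∧ M ω = m ∧ X ω = x then P ω * Y ω else 0) * g l m x := by
        calc (∑ x : 𝓧, ∑ l : 𝓛, ∑ m : 𝓜, ∑ ω : Ω,
            (if Z ω = false ∧ L ω = l ∧ M ω = m ∧ X ω = x then P ω * Y ω else 0) * g l m x)
            = ∑ x : 𝓧, ∑ l : 𝓛, ∑ ω : Ω, ∑ m : 𝓜,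
              (if Z ω = false ∧ L ω = l ∧ M ω = m ∧ X ω = x then P ω * Y ω else 0) * g l m x :=
            Finset.sum_congr rfl fun x _ => Finset.sum_congr rfl fun l _ =>
              Finset.sum_comm
          _ = ∑ x : 𝓧, ∑ ω : Ω, ∑ l : 𝓛, ∑ m : 𝓜,
              (if Z ω = false ∧ L ω = l ∧ M ω = m ∧ X ω = x then P ω * Y ω else 0) * g l m x :=
            Finset.sum_congr rfl fun x _ => Finset.sum_comm
          _ = ∑ ω : Ω, ∑ x : 𝓧, ∑ l : 𝓛, ∑ m : 𝓜,
              (if Z ω = false ∧ L ω = l ∧ M ω = m ∧ X ω = x then P ω * Y ω else 0) * g l m x :=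
            Finset.sum_comm
    _ = ex P (fun ω =>
        (if Z ω = false then Y ω else 0) / cpr P {ω' | Z ω' = false} {ω' | X ω' = X ω} *
          (cexp P Y {ω' | Z ω' = true ∧ L ω' = L ω ∧ M ω' = M ω ∧ X ω' = X ω} *
            cpr P {ω' | L ω' = L ω} {ω' | Z ω' = true ∧ X ω' = X ω}) /
          (cexp P Y {ω' | Z ω' = false ∧ L ω' = L ω ∧ M ω' = M ω ∧ X ω' = X ω} *
            cpr P {ω' | L ω' = L ω} {ω' | Z ω' = false ∧ M ω' = M ω ∧ X ω' = X ω})) := by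
        unfold ex
        exact Finset.sum_congr rfl fun ω _ => ((step1 ω).trans (step2 ω)).symm
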